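/- Let $n \geq 1$, $x \in \mathbb{R}^n$, $r > 0$, let $D = \{ p \in \mathbb{R}^n : \|p - x\| < r \}$ be the open ball of radius $r$ centred at $x$, and define $\phi : \overline{D} \to \mathbb{R}$ by $\phi(p) = \cos\!\left( \frac{\pi \|p - x\|}{2r} \right)$. Then $\phi$ is $C^2$ on $\overline{D}$, $0 < \phi \leq 1$ on $D$, $\phi(x) = 1$, $\phi = 0$ on $\partial D$, and moreover $\|\nabla \phi\| \leq \frac{\pi}{2r}$ on $D$, $-\Delta \phi \leq \frac{\pi^2 n}{4 r^2}$ on $D$, and $\sup_{D} \left( 3 \|\nabla \phi\|^2 - \phi\, \Delta \phi \right) \leq \frac{\pi^2 (n+3)}{4 r^2}$. (Euclidean case of the paper's cut-off function lemma, where $L = \frac{1}{2}\Delta$ so $3|\nabla\phi|^2 - 2\phi L\phi = 3\|\nabla\phi\|^2 - \phi\Delta\phi$.) -/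

import Mathlib

/-!
With `c = π / (2r)` and `ρ = ‖p - x‖`, write `φ p = g (ρ ^ 2)` where `g s = cos (c √s)` is taken
as its power series in `s`; `g` is entire, so `φ` is smooth also at the centre `x`.
For such a radial function `∇φ = 2 g'(ρ²) (p - x)` and `Δφ = 2n g'(ρ²) + 4ρ² g''(ρ²)`.
Differentiating `g (t²) = cos (c t)` once and twice gives `2t g'(t²) = -c sin (c t)` and
`4t² g''(t²) + 2 g'(t²) = -c² cos (c t)`, hence `‖∇φ‖ = |c sin (c ρ)|` and
`Δφ = -c² cos (c ρ) + (n - 1) 2 g'(ρ²)`, while `|2 g'(ρ²)| = c² |sin (c ρ) / (c ρ)| ≤ c²`.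
-/

open MeasureTheory Real

noncomputable def laplacian {n : ℕ} (u : EuclideanSpace ℝ (Fin n) → ℝ)
    (x : EuclideanSpace ℝ (Fin n)) : ℝ :=
  ∑ i : Fin n, iteratedFDeriv ℝ 2 u x ![EuclideanSpace.single i 1, EuclideanSpace.single i 1]

section CosSqrt

open FormalMultilinearSeries

noncomputable def cosSqrtCoeff (c : ℝ) (k : ℕ) : ℝ :=
  (-1) ^ k * c ^ (2 * k) / (2 * k).factorial

noncomputable def cosSqrt (c : ℝ) : ℝ → ℝ :=
  ofScalarsSum (cosSqrtCoeff c)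

theorem radius_ofScalars_cosSqrtCoeff (c : ℝ) :
    (ofScalars ℝ (cosSqrtCoeff c)).radius = ⊤ := by
  refine radius_eq_top_of_summable_norm _ fun ρ => ?_
  refine .of_nonneg_of_le (fun _ => by positivity) (fun k => ?_)
    (Real.summable_pow_div_factorial (c ^ 2 * ρ))
  rw [ofScalars_norm, cosSqrtCoeff, Real.norm_eq_abs, abs_div, abs_mul, abs_pow, abs_neg,
    abs_one, one_pow, one_mul, pow_mul, abs_pow, abs_sq, Nat.abs_cast, mul_pow,
    div_mul_eq_mul_div]
  gcongr
  omega

theorem contDiff_cosSqrt {n : WithTop ℕ∞} (c : ℝ) : ContDiff ℝ n (cosSqrt c) := by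
  refine AnalyticOnNhd.contDiff fun s _ => ?_
  have := (ofScalars ℝ (cosSqrtCoeff c)).hasFPowerSeriesOnBall
    (by rw [radius_ofScalars_cosSqrtCoeff]; exact ENNReal.zero_lt_top)
  rw [radius_ofScalars_cosSqrtCoeff] at this
  exact this.analyticOnNhd s (by simp)

theorem cosSqrt_sq (c t : ℝ) : cosSqrt c (t ^ 2) = cos (c * t) := by
  rw [cosSqrt, ofScalars_sum_eq, Real.cos_eq_tsum]
  refine tsum_congr fun k => ?_
  rw [cosSqrtCoeff, smul_eq_mul, ← pow_mul, mul_pow]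
  ring

end CosSqrt

theorem hasDerivAt_comp_sq {f : ℝ → ℝ} {t : ℝ} (hf : DifferentiableAt ℝ f (t ^ 2)) :
    HasDerivAt (fun t => f (t ^ 2)) (2 * t * deriv f (t ^ 2)) t := by
  have hsq : HasDerivAt (fun t : ℝ => t ^ 2) (2 * t) t := by simpa using hasDerivAt_pow 2 t
  rw [mul_comm]
  exact HasDerivAt.comp (h := fun t : ℝ => t ^ 2) t hf.hasDerivAt hsq

theorem two_mul_mul_deriv_cosSqrt_sq (c t : ℝ) :
    2 * t * deriv (cosSqrt c) (t ^ 2) = -(c * sin (c * t)) := by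
  have hcos : HasDerivAt (fun t => cos (c * t)) (-(c * sin (c * t))) t := by
    simpa [mul_comm] using ((hasDerivAt_id' t).const_mul c).cos
  have hcomp := hasDerivAt_comp_sq (t := t)
    ((contDiff_cosSqrt (n := 1) c).differentiable one_ne_zero _)
  simp only [cosSqrt_sq] at hcomp
  exact hcomp.unique hcos

theorem deriv_deriv_cosSqrt_sq (c t : ℝ) :
    4 * t ^ 2 * deriv (deriv (cosSqrt c)) (t ^ 2) + 2 * deriv (cosSqrt c) (t ^ 2) =
      -(c ^ 2 * cos (c * t)) := by
  have hderiv : Differentiable ℝ (deriv (cosSqrt c)) :=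
    (contDiff_succ_iff_deriv.mp (contDiff_cosSqrt (n := 1 + 1) c)).2.2.differentiable
      one_ne_zero
  have h2t : HasDerivAt (fun t : ℝ => 2 * t) 2 t := by simpa using (hasDerivAt_id' t).const_mul 2
  have hlhs := h2t.fun_mul (hasDerivAt_comp_sq (hderiv (t ^ 2)))
  have hrhs : HasDerivAt (fun t => -(c * sin (c * t))) (-(c ^ 2 * cos (c * t))) t :=
    (((hasDerivAt_id' t).const_mul c).sin.const_mul c).neg.congr_deriv (by ring)
  simp only [two_mul_mul_deriv_cosSqrt_sq] at hlhs
  linear_combination hlhs.unique hrhs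

theorem abs_two_mul_deriv_cosSqrt_le (c : ℝ) {s : ℝ} (hs : 0 ≤ s) :
    |2 * deriv (cosSqrt c) s| ≤ c ^ 2 := by
  obtain ⟨t, ht, rfl⟩ : ∃ t, 0 ≤ t ∧ t ^ 2 = s := ⟨√s, sqrt_nonneg s, sq_sqrt hs⟩
  rcases ht.eq_or_lt with rfl | ht
  · have h0 : 2 * deriv (cosSqrt c) (0 ^ 2) = -c ^ 2 := by
      simpa using deriv_deriv_cosSqrt_sq c 0
    rw [h0, abs_neg, abs_sq]
  · have habs : t * |2 * deriv (cosSqrt c) (t ^ 2)| = |c| * |sin (c * t)| := by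
      rw [← abs_of_pos ht, ← abs_mul, ← mul_assoc, mul_comm _ (2 : ℝ), abs_of_pos ht,
        two_mul_mul_deriv_cosSqrt_sq, abs_neg, abs_mul]
    have hsin : |sin (c * t)| ≤ |c| * t := by
      simpa [abs_mul, abs_of_pos ht] using abs_sin_le_abs (x := c * t)
    rw [← sq_abs c]
    nlinarith [abs_nonneg c]

open scoped RealInnerProductSpace

section Radial

variable {E : Type*} [NormedAddCommGroup E] [InnerProductSpace ℝ E] {g : ℝ → ℝ} {x p : E}

theorem hasFDerivAt_comp_norm_sub_sq (hg : DifferentiableAt ℝ g (‖p - x‖ ^ 2)) :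
    HasFDerivAt (fun q => g (‖q - x‖ ^ 2))
      ((2 * deriv g (‖p - x‖ ^ 2)) • innerSL ℝ (p - x)) p := by
  have hsq : HasFDerivAt (fun q => ‖q - x‖ ^ 2) (2 • innerSL ℝ (p - x)) p := by
    simpa using ((hasFDerivAt_id p).sub_const x).norm_sq
  refine (hg.hasDerivAt.comp_hasFDerivAt p hsq).congr_fderiv ?_
  ext v
  simp only [smul_apply, coe_innerSL_apply, nsmul_eq_mul, Nat.cast_ofNat, smul_eq_mul]
  ring

theorem norm_fderiv_comp_norm_sub_sq (hg : DifferentiableAt ℝ g (‖p - x‖ ^ 2)) :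
    ‖fderiv ℝ (fun q => g (‖q - x‖ ^ 2)) p‖ =
      |2 * deriv g (‖p - x‖ ^ 2)| * ‖p - x‖ := by
  rw [(hasFDerivAt_comp_norm_sub_sq hg).fderiv, norm_smul, innerSL_apply_norm, Real.norm_eq_abs]

theorem fderiv_fderiv_comp_norm_sub_sq_apply (hg : ContDiff ℝ 2 g) (e : E) :
    fderiv ℝ (fderiv ℝ fun q => g (‖q - x‖ ^ 2)) p e e =
      2 * deriv g (‖p - x‖ ^ 2) * ‖e‖ ^ 2 +
        4 * deriv (deriv g) (‖p - x‖ ^ 2) * ⟪p - x, e⟫ ^ 2 := by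
  have hg' : Differentiable ℝ (deriv g) :=
    (contDiff_succ_iff_deriv.mp (hg : ContDiff ℝ (1 + 1) g)).2.2.differentiable one_ne_zero
  have hfd : fderiv ℝ (fun q => g (‖q - x‖ ^ 2)) =
      fun q => (2 * deriv g (‖q - x‖ ^ 2)) • innerSL ℝ (q - x) :=
    funext fun q => (hasFDerivAt_comp_norm_sub_sq (hg.differentiable two_ne_zero _)).fderiv
  have hcoef :=
    (hasFDerivAt_comp_norm_sub_sq (g := deriv g) (x := x) (p := p) (hg' _)).const_mul 2
  have hinner :
      HasFDerivAt (fun q => innerSL ℝ (q - x)) (innerSL ℝ : E →L[ℝ] E →L[ℝ] ℝ) p := by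
    have := (innerSL ℝ).hasFDerivAt.comp p ((hasFDerivAt_id p).sub_const x)
    rwa [ContinuousLinearMap.comp_id] at this
  rw [hfd, (hcoef.fun_smul hinner).fderiv]
  simp only [add_apply, smul_apply, ContinuousLinearMap.smulRight_apply, coe_innerSL_apply,
    smul_eq_mul]
  rw [innerSL_apply_apply, real_inner_self_eq_norm_sq]
  ring

end Radial

theorem laplacian_comp_norm_sub_sq {n : ℕ} {g : ℝ → ℝ} (hg : ContDiff ℝ 2 g)
    (x p : EuclideanSpace ℝ (Fin n)) :
    laplacian (fun q => g (‖q - x‖ ^ 2)) p =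
      2 * n * deriv g (‖p - x‖ ^ 2) +
        4 * ‖p - x‖ ^ 2 * deriv (deriv g) (‖p - x‖ ^ 2) := by
  have hsum := (EuclideanSpace.basisFun (Fin n) ℝ).sum_sq_inner_left (p - x)
  simp only [EuclideanSpace.basisFun_apply] at hsum
  simp only [laplacian, iteratedFDeriv_two_apply, Matrix.cons_val_zero, Matrix.cons_val_one,
    fderiv_fderiv_comp_norm_sub_sq_apply hg, PiLp.norm_single, norm_one, one_pow,
    Finset.sum_add_distrib, ← Finset.mul_sum, hsum, Finset.sum_const, Finset.card_univ,
    Fintype.card_fin, nsmul_eq_mul]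
  ring

theorem norm_fderiv_cosSqrt_norm_sub_sq {E : Type*} [NormedAddCommGroup E]
    [InnerProductSpace ℝ E] (c : ℝ) (x p : E) :
    ‖fderiv ℝ (fun q => cosSqrt c (‖q - x‖ ^ 2)) p‖ = |c * sin (c * ‖p - x‖)| := by
  rw [norm_fderiv_comp_norm_sub_sq ((contDiff_cosSqrt c).differentiable one_ne_zero _),
    ← abs_neg (c * _), ← two_mul_mul_deriv_cosSqrt_sq, abs_mul, abs_mul, abs_mul, abs_norm]
  ring

theorem laplacian_cosSqrt_norm_sub_sq {n : ℕ} (c : ℝ) (x p : EuclideanSpace ℝ (Fin n)) :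
    laplacian (fun q => cosSqrt c (‖q - x‖ ^ 2)) p =
      -(c ^ 2 * cos (c * ‖p - x‖)) + (n - 1) * (2 * deriv (cosSqrt c) (‖p - x‖ ^ 2)) := by
  rw [laplacian_comp_norm_sub_sq (contDiff_cosSqrt c)]
  linear_combination deriv_deriv_cosSqrt_sq c ‖p - x‖

section CutoffBounds

variable {n : ℕ} (c : ℝ) (x p : EuclideanSpace ℝ (Fin n))

theorem neg_laplacian_cosSqrt_norm_sub_sq_le (hn : 1 ≤ n) :
    -laplacian (fun q => cosSqrt c (‖q - x‖ ^ 2)) p ≤ n * c ^ 2 := by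
  have hn' : (0 : ℝ) ≤ n - 1 := by simp [hn]
  have hderiv := neg_le_of_abs_le (abs_two_mul_deriv_cosSqrt_le c (sq_nonneg ‖p - x‖))
  rw [laplacian_cosSqrt_norm_sub_sq]
  nlinarith [cos_le_one (c * ‖p - x‖), sq_nonneg c]

theorem three_mul_sq_norm_fderiv_sub_mul_laplacian_le (hn : 1 ≤ n) :
    3 * ‖fderiv ℝ (fun q => cosSqrt c (‖q - x‖ ^ 2)) p‖ ^ 2 -
        cosSqrt c (‖p - x‖ ^ 2) * laplacian (fun q => cosSqrt c (‖q - x‖ ^ 2)) p ≤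
      (n + 2) * c ^ 2 := by
  set θ := c * ‖p - x‖
  have hn' : (0 : ℝ) ≤ n - 1 := by simp [hn]
  have hderiv := abs_two_mul_deriv_cosSqrt_le c (sq_nonneg ‖p - x‖)
  have hcross : |2 * deriv (cosSqrt c) (‖p - x‖ ^ 2) * cos θ| ≤ c ^ 2 := by
    rw [abs_mul]
    exact (mul_le_of_le_one_right (abs_nonneg _) (abs_cos_le_one θ)).trans hderiv
  rw [norm_fderiv_cosSqrt_norm_sub_sq, laplacian_cosSqrt_norm_sub_sq, cosSqrt_sq, sq_abs]
  nlinarith [neg_abs_le (2 * deriv (cosSqrt c) (‖p - x‖ ^ 2) * cos θ), sin_sq_add_cos_sq θ,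
    sq_nonneg c, sq_nonneg (c * sin θ)]

end CutoffBounds

/-- Euclidean cut-off function lemma: on the ball `D` of radius `r` centred at `x`,
the function `φ(p) = cos(π ‖p - x‖ / (2r))` is `C²` on `closure D`, satisfies
`0 < φ ≤ 1` on `D`, `φ(x) = 1`, `φ = 0` on `∂D`, `‖∇φ‖ ≤ π/(2r)` on `D`,
`-Δφ ≤ π²n/(4r²)` on `D`, and `3‖∇φ‖² - φ Δφ ≤ π²(n+3)/(4r²)` on `D`. -/
theorem cutoff_function_lemma {n : ℕ} (hn : 1 ≤ n)
    (x : EuclideanSpace ℝ (Fin n)) (r : ℝ) (hr : 0 < r)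
    (D : Set (EuclideanSpace ℝ (Fin n))) (hD : D = Metric.ball x r)
    (φ : EuclideanSpace ℝ (Fin n) → ℝ)
    (hφ : φ = fun p => Real.cos (π * dist p x / (2 * r))) :
    ContDiffOn ℝ 2 φ (closure D) ∧
    (∀ p ∈ D, 0 < φ p ∧ φ p ≤ 1) ∧
    φ x = 1 ∧
    (∀ p ∈ frontier D, φ p = 0) ∧
    (∀ p ∈ D, ‖fderiv ℝ φ p‖ ≤ π / (2 * r)) ∧
    (∀ p ∈ D, -laplacian φ p ≤ π ^ 2 * n / (4 * r ^ 2)) ∧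
    (∀ p ∈ D, 3 * ‖fderiv ℝ φ p‖ ^ 2 - φ p * laplacian φ p ≤
      π ^ 2 * (n + 3) / (4 * r ^ 2)) := by
  set c := π / (2 * r) with hc
  have hc_pos : 0 < c := by positivity
  have hcr : c * r = π / 2 := by rw [hc]; field_simp
  have hπ_sq : π ^ 2 / (4 * r ^ 2) = c ^ 2 := by rw [hc]; ring
  have hφ_eq : φ = fun q => cosSqrt c (‖q - x‖ ^ 2) := by
    ext q; simp only [hφ, cosSqrt_sq, dist_eq_norm, hc]; ring_nf
  clear hφ
  subst hD hφ_eq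
  refine ⟨((contDiff_cosSqrt c).comp ((contDiff_norm_sq ℝ).comp
      (contDiff_id.sub contDiff_const))).contDiffOn, fun p hp => ?_, ?_, fun p hp => ?_,
    fun p _ => ?_, fun p _ => ?_, fun p _ => ?_⟩
  · rw [Metric.mem_ball, dist_eq_norm] at hp
    have hθ : c * ‖p - x‖ < π / 2 := hcr ▸ mul_lt_mul_of_pos_left hp hc_pos
    simp only [cosSqrt_sq]
    have hθ₀ : 0 ≤ c * ‖p - x‖ := by positivity
    exact ⟨cos_pos_of_mem_Ioo ⟨by linarith [pi_pos], hθ⟩, cos_le_one _⟩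
  · simp only [sub_self, norm_zero, cosSqrt_sq, mul_zero, cos_zero]
  · rw [frontier_ball x hr.ne', mem_sphere_iff_norm] at hp
    simp only [cosSqrt_sq, hp, hcr, cos_pi_div_two]
  · rw [norm_fderiv_cosSqrt_norm_sub_sq, abs_mul, abs_of_pos hc_pos]
    exact mul_le_of_le_one_right hc_pos.le (abs_sin_le_one _)
  · rw [mul_div_right_comm, hπ_sq, mul_comm (c ^ 2)]
    exact neg_laplacian_cosSqrt_norm_sub_sq_le c x p hn
  · rw [mul_div_right_comm, hπ_sq, mul_comm (c ^ 2)]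
    calc _ ≤ (n + 2) * c ^ 2 := three_mul_sq_norm_fderiv_sub_mul_laplacian_le c x p hn
      _ ≤ (n + 3) * c ^ 2 := by gcongr; norm_num
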